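/- If M = S(cl(Θ)) is convex, then for every t ∈ (0,1)^m the φ-projection of t on M exists and is unique: there is exactly one s* ∈ M with D_φ(s*∣t) = inf_{s∈M} D_φ(s∣t). -/

import Mathlib

open Filter Topology

/-- The extended-real-valued integrand `f(v,w)` of a `φ`-divergence:
`f(v,w) = w·φ(v/w)` if `w > 0`, `f(v,0) = v·L` if `v > 0`, and `f(0,0) = 0`,
where `L = lim_{x→∞} φ(x)/x ∈ ℝ ∪ {∞}`. -/
noncomputable def phiF (φ : ℝ → ℝ) (L : EReal) (v w : ℝ) : EReal :=
  if 0 < w then ((w * φ (v / w) : ℝ) : EReal)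
  else if 0 < v then (v : EReal) * L
  else 0

/-- The `φ`-divergence `D_φ(s∣t) = Σ_{i=1}^m f(s_i, t_i)` of `s` relative to `t`. -/
noncomputable def Dphi (φ : ℝ → ℝ) (L : EReal) {m : ℕ} (s t : Fin m → ℝ) : EReal :=
  ∑ i, phiF φ L (s i) (t i)

/-- `p` is a `φ`-projection of `t` on `M`: `p ∈ M` and `D_φ(p∣t) = inf_{s ∈ M} D_φ(s∣t)`. -/
def IsPhiProj (φ : ℝ → ℝ) (L : EReal) {m : ℕ} (M : Set (Fin m → ℝ))
    (t p : Fin m → ℝ) : Prop :=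
  p ∈ M ∧ Dphi φ L p t = ⨅ s ∈ M, Dphi φ L s t

/-!
For `t` with positive coordinates every term of `D_φ(·∣t)` is the real number `t i * φ (s i / t i)`,
so the divergence is a real function of `s` on the nonnegative orthant. There it is continuous
(a convex function on `[0, ∞)` continuous at `0` is continuous) and strictly convex (each
perspective term is strictly convex in its own coordinate, and two distinct points differ in
some coordinate). On the compact convex set `M = S(cl Θ)` it therefore attains its minimum,
and at exactly one point.
-/

open Set

theorem StrictConvexOn.sum_apply_pi {𝕜 ι : Type*} [Field 𝕜] [LinearOrder 𝕜]
    [IsStrictOrderedRing 𝕜] [Fintype ι] {E : ι → Type*} [∀ i, AddCommGroup (E i)]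
    [∀ i, Module 𝕜 (E i)] {s : ∀ i, Set (E i)} {f : ∀ i, E i → 𝕜}
    (hf : ∀ i, StrictConvexOn 𝕜 (s i) (f i)) :
    StrictConvexOn 𝕜 (univ.pi s) (fun x => ∑ i, f i (x i)) := by
  refine ⟨convex_pi fun i _ => (hf i).1, fun x hx y hy hxy a b ha hb hab => ?_⟩
  obtain ⟨j, hj⟩ := Function.ne_iff.1 hxy
  calc ∑ i, f i ((a • x + b • y) i)
      < ∑ i, (a • f i (x i) + b • f i (y i)) := by
        refine Finset.sum_lt_sum (fun i _ => (hf i).convexOn.2 (hx i trivial) (hy i trivial)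
          ha.le hb.le hab) ⟨j, Finset.mem_univ j, (hf j).2 (hx j trivial) (hy j trivial) hj ha hb hab⟩
    _ = a • ∑ i, f i (x i) + b • ∑ i, f i (y i) := by
        rw [Finset.sum_add_distrib, Finset.smul_sum, Finset.smul_sum]

theorem StrictConvexOn.perspective {φ : ℝ → ℝ} (hφ : StrictConvexOn ℝ (Ici 0) φ) {t : ℝ}
    (ht : 0 < t) : StrictConvexOn ℝ (Ici 0) (fun x => t * φ (x / t)) := by
  refine ⟨convex_Ici 0, fun x hx y hy hxy a b ha hb hab => ?_⟩
  have hdiv : x / t ≠ y / t := fun h => hxy ((div_left_inj' ht.ne').1 h)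
  have hlt := hφ.2 (div_nonneg hx ht.le) (div_nonneg hy ht.le) hdiv ha hb hab
  calc t * φ ((a • x + b • y) / t) = t * φ (a • (x / t) + b • (y / t)) := by
        simp only [smul_eq_mul, add_div, mul_div_assoc]
    _ < t * (a • φ (x / t) + b • φ (y / t)) := mul_lt_mul_of_pos_left hlt ht
    _ = a • (t * φ (x / t)) + b • (t * φ (y / t)) := by simp only [smul_eq_mul]; ring

theorem continuousOn_sum_mul_comp_div {ι : Type*} [Fintype ι] {φ : ℝ → ℝ}
    (hφ : ContinuousOn φ (Ici 0)) {t : ι → ℝ} (ht : ∀ i, 0 ≤ t i) :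
    ContinuousOn (fun s : ι → ℝ => ∑ i, t i * φ (s i / t i)) (univ.pi fun _ => Ici 0) := by
  refine continuousOn_finsetSum _ fun i _ => continuousOn_const.mul (hφ.comp ?_ ?_)
  · exact ((continuous_apply (A := fun _ : ι => ℝ) i).div_const (t i)).continuousOn
  · exact fun s hs => div_nonneg (hs i trivial) (ht i)

theorem IsCompact.existsUnique_isMinOn_of_strictConvexOn {E : Type*} [AddCommGroup E]
    [Module ℝ E] [TopologicalSpace E] {K : Set E} {f : E → ℝ} (hK : IsCompact K)
    (hne : K.Nonempty) (hf : StrictConvexOn ℝ K f) (hfc : ContinuousOn f K) :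
    ∃! x, x ∈ K ∧ IsMinOn f K x := by
  obtain ⟨x, hx, hmin⟩ := hK.exists_isMinOn hne hfc
  exact ⟨x, ⟨hx, hmin⟩, fun y ⟨hy, hymin⟩ => hf.eq_of_isMinOn hymin hmin hy hx⟩

theorem EReal.coe_eq_biInf_coe_iff_isMinOn {α : Type*} {g : α → ℝ} {M : Set α} {p : α}
    (hp : p ∈ M) : ((g p : ℝ) : EReal) = ⨅ s ∈ M, ((g s : ℝ) : EReal) ↔ IsMinOn g M p := by
  refine ⟨fun h s hs => EReal.coe_le_coe_iff.1 (h ▸ iInf₂_le s hs), fun h => ?_⟩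
  exact le_antisymm (le_iInf₂ fun s hs => EReal.coe_le_coe_iff.2 (h hs)) (iInf₂_le p hp)

theorem EReal.coe_finsetSum {ι : Type*} (s : Finset ι) (f : ι → ℝ) :
    ((∑ i ∈ s, f i : ℝ) : EReal) = ∑ i ∈ s, (f i : EReal) :=
  map_sum (⟨⟨(↑), EReal.coe_zero⟩, EReal.coe_add⟩ : ℝ →+ EReal) f s

theorem Dphi_eq_coe_sum (φ : ℝ → ℝ) (L : EReal) {m : ℕ} (s : Fin m → ℝ) {t : Fin m → ℝ}
    (ht : ∀ i, 0 < t i) : Dphi φ L s t = ((∑ i, t i * φ (s i / t i) : ℝ) : EReal) := by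
  simp only [Dphi, phiF, if_pos (ht _), EReal.coe_finsetSum]

theorem isPhiProj_iff_isMinOn (φ : ℝ → ℝ) (L : EReal) {m : ℕ} (M : Set (Fin m → ℝ))
    {t : Fin m → ℝ} (ht : ∀ i, 0 < t i) (p : Fin m → ℝ) :
    IsPhiProj φ L M t p ↔ p ∈ M ∧ IsMinOn (fun s => ∑ i, t i * φ (s i / t i)) M p := by
  simp only [IsPhiProj, Dphi_eq_coe_sum φ L _ ht]
  exact and_congr_right fun hp =>
    EReal.coe_eq_biInf_coe_iff_isMinOn (g := fun s => ∑ i, t i * φ (s i / t i)) hp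

theorem statement14_general (m k : ℕ)
    (φ : ℝ → ℝ) (L : EReal)
    (hφ0 : ContinuousWithinAt φ (Set.Ici 0) 0)
    (hφsc : StrictConvexOn ℝ (Set.Ici (0 : ℝ)) φ)
    (Θ : Set (Fin k → ℝ)) (hΘbd : Bornology.IsBounded Θ)
    (hΘint : (interior Θ).Nonempty)
    (S : (Fin k → ℝ) → (Fin m → ℝ))
    (hScont : ContinuousOn S (closure Θ))
    (hSrange : ∀ θ ∈ closure Θ, ∀ i, S θ i ∈ Set.Icc (0 : ℝ) 1)
    (hMconv : Convex ℝ (S '' closure Θ)) :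
    ∀ t : Fin m → ℝ, (∀ i, t i ∈ Set.Ioo (0 : ℝ) 1) →
      ∃! s, IsPhiProj φ L (S '' closure Θ) t s := by
  intro t ht
  have htpos : ∀ i, 0 < t i := fun i => (ht i).1
  have hM_nonneg : S '' closure Θ ⊆ univ.pi fun _ => Ici 0 := by
    rintro _ ⟨θ, hθ, rfl⟩ i -
    exact (hSrange θ hθ i).1
  have hM_compact : IsCompact (S '' closure Θ) :=
    hΘbd.isCompact_closure.image_of_continuousOn hScont
  have hM_ne : (S '' closure Θ).Nonempty :=
    (hΘint.mono (interior_subset.trans subset_closure)).image S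
  have hg_strict := StrictConvexOn.sum_apply_pi fun i => hφsc.perspective (htpos i)
  have hg_cont := continuousOn_sum_mul_comp_div (hφsc.convexOn.continuousOn_Ici hφ0)
    fun i => (htpos i).le
  simp_rw [isPhiProj_iff_isMinOn φ L _ htpos]
  exact hM_compact.existsUnique_isMinOn_of_strictConvexOn hM_ne
    (hg_strict.subset hM_nonneg hMconv) (hg_cont.mono hM_nonneg)

/-- under the framework assumptions, if `M = S(cl Θ)` is convex then
for every `t ∈ (0,1)^m` the `φ`-projection of `t` on `M` exists and is unique. -/
theorem statement14 (m k : ℕ) (hm : 1 ≤ m) (hk : 1 ≤ k) (hkm : k ≤ m)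
    (φ : ℝ → ℝ) (L : EReal)
    (hφconv : ConvexOn ℝ (Set.Ici 0) φ)
    (hφ0 : ContinuousWithinAt φ (Set.Ici 0) 0)
    (hL : Tendsto (fun x : ℝ => ((φ x / x : ℝ) : EReal)) atTop (𝓝 L))
    (hφsc : StrictConvexOn ℝ (Set.Ici (0 : ℝ)) φ)
    (hφC2 : ContDiffOn ℝ 2 φ (Set.Ioi (0 : ℝ)))
    (Θ : Set (Fin k → ℝ)) (hΘbd : Bornology.IsBounded Θ)
    (hΘint : (interior Θ).Nonempty)
    (S : (Fin k → ℝ) → (Fin m → ℝ))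
    (hScont : ContinuousOn S (closure Θ))
    (hSinj : Set.InjOn S (closure Θ))
    (hSC2 : ContDiffOn ℝ 2 S (interior Θ))
    (hSrange : ∀ θ ∈ closure Θ, ∀ i, S θ i ∈ Set.Icc (0 : ℝ) 1)
    (hSint : ∀ θ ∈ interior Θ, ∀ i, S θ i ∈ Set.Ioo (0 : ℝ) 1)
    (hMconv : Convex ℝ (S '' closure Θ)) :
    ∀ t : Fin m → ℝ, (∀ i, t i ∈ Set.Ioo (0 : ℝ) 1) →
      ∃! s, IsPhiProj φ L (S '' closure Θ) t s :=
  statement14_general m k φ L hφ0 hφsc Θ hΘbd hΘint S hScont hSrange hMconv
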